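/- arXiv:1805.11238 — 5 statements merged into one kernel-verified Lean document; each statement's English description precedes it below -/
import Mathlib

section
/- For any positive integer n and any unit Euclidean norm vectors u_1, …, u_{2n} ∈ ℝ^n, there exist indices 1 ≤ i ≠ j ≤ 2n with |⟨u_i,u_j⟩| > 1/(2√n). -/
/-!
Let `G = (⟨uᵢ, uⱼ⟩)` be the Gram matrix of the `2n` unit vectors and `U` the matrix with rows `uᵢ`.
Since `G = U Uᵀ`, its squared Frobenius norm equals that of the `n × n` matrix `Uᵀ U`, which
by Cauchy–Schwarz on the diagonal is at least `(tr Uᵀ U)² / n = (2n)² / n = 4n`. If all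
off-diagonal entries of `G` had absolute value at most `1 / (2√n)`, the same quantity would be
at most `2n + 2n (2n - 1) / (4n) < 3n`.
-/

open Finset

section Gram

variable {ι κ : Type*} [Fintype ι] [Fintype κ]

theorem sum_sq_sum_mul_eq_sum_sq_sum_mul {R : Type*} [CommSemiring R] (u : ι → κ → R) :
    ∑ i, ∑ j, (∑ k, u i k * u j k) ^ 2 = ∑ k, ∑ l, (∑ i, u i k * u i l) ^ 2 := by
  simp_rw [sq, sum_mul_sum]
  calc _ = ∑ i, ∑ k, ∑ j, ∑ l, u i k * u i l * (u j k * u j l) := by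
        refine sum_congr rfl fun i _ => ?_
        rw [sum_comm]
        exact sum_congr rfl fun k _ => sum_congr rfl fun j _ => sum_congr rfl fun l _ => by ring
    _ = ∑ k, ∑ i, ∑ l, ∑ j, u i k * u i l * (u j k * u j l) := by
        rw [sum_comm]
        exact sum_congr rfl fun k _ => sum_congr rfl fun i _ => sum_comm
    _ = _ := sum_congr rfl fun k _ => sum_comm

theorem sq_sum_sq_le_card_mul_sum_sq_inner (u : ι → κ → ℝ) :
    (∑ i, ∑ k, u i k ^ 2) ^ 2 ≤ Fintype.card κ * ∑ i, ∑ j, (∑ k, u i k * u j k) ^ 2 := by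
  rw [sum_sq_sum_mul_eq_sum_sq_sum_mul, sum_comm]
  calc (∑ k, ∑ i, u i k ^ 2) ^ 2 ≤ Fintype.card κ * ∑ k, (∑ i, u i k ^ 2) ^ 2 := by
        simpa using sq_sum_le_card_mul_sum_sq (s := univ) (f := fun k => ∑ i, u i k ^ 2)
    _ ≤ _ := by
        gcongr with k
        simp_rw [sq (u _ k)]
        exact single_le_sum (f := fun l => (∑ i, u i k * u i l) ^ 2)
          (fun _ _ => sq_nonneg _) (mem_univ k)

theorem card_sq_le_of_sq_inner_le [DecidableEq ι] (u : ι → κ → ℝ)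
    (hunit : ∀ i, ∑ k, u i k ^ 2 = 1) {ε : ℝ}
    (hε : ∀ i j, i ≠ j → (∑ k, u i k * u j k) ^ 2 ≤ ε) :
    (Fintype.card ι : ℝ) ^ 2 ≤
      Fintype.card κ * (Fintype.card ι + Fintype.card ι * (Fintype.card ι - 1) * ε) := by
  have hrow : ∀ i, ∑ j, (∑ k, u i k * u j k) ^ 2 ≤ 1 + (Fintype.card ι - 1) * ε := fun i => by
    rw [← add_sum_erase _ _ (mem_univ i)]
    have hdiag : (∑ k, u i k * u i k) ^ 2 = 1 := by simp [← sq, hunit]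
    have hoff := sum_le_card_nsmul (univ.erase i) (fun j => (∑ k, u i k * u j k) ^ 2) ε
      fun j hj => hε i j (ne_of_mem_erase hj).symm
    rw [card_erase_of_mem (mem_univ i), card_univ, nsmul_eq_mul,
      Nat.cast_pred (Fintype.card_pos_iff.mpr ⟨i⟩)] at hoff
    rw [hdiag]
    gcongr
  have hgram := sq_sum_sq_le_card_mul_sum_sq_inner u
  simp only [hunit, sum_const, card_univ, nsmul_eq_mul, mul_one] at hgram
  calc _ ≤ _ := hgram
    _ ≤ _ := by
      gcongr
      calc _ ≤ ∑ _ : ι, (1 + (Fintype.card ι - 1) * ε) := sum_le_sum fun i _ => hrow i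
        _ = _ := by rw [sum_const, card_univ, nsmul_eq_mul]; ring

end Gram

/-- For any `2n` unit vectors in `ℝⁿ`, some pair of distinct
vectors has `|⟨uᵢ,uⱼ⟩| > 1/(2√n)`. -/
theorem exists_pair_inner_gt
    (n : ℕ) (hn : 0 < n) (u : Fin (2 * n) → (Fin n → ℝ))
    (hunit : ∀ i, ∑ k : Fin n, (u i k) ^ 2 = 1) :
    ∃ i j : Fin (2 * n), i ≠ j ∧
      1 / (2 * Real.sqrt n) < |∑ k : Fin n, u i k * u j k| := by
  by_contra! hsmall
  have hn' : (0 : ℝ) < n := by exact_mod_cast hn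
  have hsq : ∀ i j, i ≠ j → (∑ k, u i k * u j k) ^ 2 ≤ 1 / (4 * n) := fun i j hij => by
    calc (∑ k, u i k * u j k) ^ 2 = |∑ k, u i k * u j k| ^ 2 := (sq_abs _).symm
      _ ≤ (1 / (2 * Real.sqrt n)) ^ 2 := pow_le_pow_left₀ (abs_nonneg _) (hsmall i j hij) 2
      _ = 1 / (4 * n) := by rw [div_pow, mul_pow, Real.sq_sqrt hn'.le]; norm_num
  have hwelch := card_sq_le_of_sq_inner_le u hunit hsq
  simp only [Fintype.card_fin, Nat.cast_mul, Nat.cast_ofNat] at hwelch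
  field_simp at hwelch
  nlinarith
end

section
/- For any positive integer n and any unit Euclidean norm vectors u_1, …, u_{2n} ∈ ℝ^n, we have max_{1 ≤ i ≠ j ≤ 2n} |⟨u_i,u_j⟩| ≥ 1/√(2(2n−1)). -/
/-!
Put the unit vectors `u₁, …, u_m ∈ ℝᵈ` as the rows of a matrix `U`. The Gram matrix `U Uᵀ` and
the frame operator `Uᵀ U` have the same trace `m` and the same Frobenius norm, since
`tr ((U Uᵀ)²) = tr ((Uᵀ U)²)`. Cauchy–Schwarz on the diagonal of the `d × d` frame operator gives
`m² ≤ d · ∑ᵢⱼ ⟨uᵢ, uⱼ⟩²`, while off-diagonal inner products of size at most `t` bound the right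
side by `d · m (1 + (m - 1) t²)`. For `m = 2n`, `d = n` and `t² = 1 / (2 (2n - 1))` this reads
`4n² ≤ 3n²`.
-/

open Finset Matrix

variable {ι κ : Type*} [Fintype ι] [Fintype κ]

namespace Matrix

theorem sum_sq_entries_eq_trace_mul_transpose (A : Matrix ι κ ℝ) :
    ∑ i, ∑ j, A i j ^ 2 = trace (A * Aᵀ) := by
  simp only [sq, ← sum_hadamard_eq, hadamard_apply]

theorem sum_sq_entries_mul_transpose_self (A : Matrix ι κ ℝ) :
    ∑ i, ∑ j, (A * Aᵀ) i j ^ 2 = ∑ k, ∑ l, (Aᵀ * A) k l ^ 2 := by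
  simp only [sum_sq_entries_eq_trace_mul_transpose, transpose_mul, transpose_transpose,
    Matrix.mul_assoc]
  rw [trace_mul_comm, Matrix.mul_assoc, Matrix.mul_assoc]

theorem sq_trace_le_card_mul_sum_sq_entries (A : Matrix κ κ ℝ) :
    trace A ^ 2 ≤ Fintype.card κ * ∑ k, ∑ l, A k l ^ 2 :=
  calc trace A ^ 2 ≤ Fintype.card κ * ∑ k, A k k ^ 2 := sq_sum_le_card_mul_sum_sq
    _ ≤ Fintype.card κ * ∑ k, ∑ l, A k l ^ 2 := by
      gcongr with k
      exact single_le_sum (f := fun l ↦ A k l ^ 2) (fun _ _ ↦ sq_nonneg _) (mem_univ k)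

theorem sq_trace_mul_transpose_le (A : Matrix ι κ ℝ) :
    trace (A * Aᵀ) ^ 2 ≤ Fintype.card κ * ∑ i, ∑ j, (A * Aᵀ) i j ^ 2 := by
  rw [trace_mul_comm, sum_sq_entries_mul_transpose_self]
  exact sq_trace_le_card_mul_sum_sq_entries _

end Matrix

theorem sum_sq_dotProduct_le [DecidableEq ι] {u : ι → κ → ℝ} {t : ℝ} (i : ι)
    (hu : u i ⬝ᵥ u i = 1) (ht : ∀ j, i ≠ j → (u i ⬝ᵥ u j) ^ 2 ≤ t) :
    ∑ j, (u i ⬝ᵥ u j) ^ 2 ≤ 1 + (Fintype.card ι - 1) * t := by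
  rw [← add_sum_erase _ _ (mem_univ i), hu, one_pow]
  have hcard : (#(univ.erase i) : ℝ) = Fintype.card ι - 1 := by
    rw [card_erase_of_mem (mem_univ i), card_univ, Nat.cast_pred (Fintype.card_pos_iff.mpr ⟨i⟩)]
  have hrest : ∑ j ∈ univ.erase i, (u i ⬝ᵥ u j) ^ 2 ≤ #(univ.erase i) • t :=
    sum_le_card_nsmul _ _ t fun j hj ↦ ht j (ne_of_mem_erase hj).symm
  rw [nsmul_eq_mul, hcard] at hrest
  linarith

theorem sq_card_le_of_sq_dotProduct_le {u : ι → κ → ℝ} {t : ℝ} (hu : ∀ i, u i ⬝ᵥ u i = 1)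
    (ht : ∀ i j, i ≠ j → (u i ⬝ᵥ u j) ^ 2 ≤ t) :
    (Fintype.card ι : ℝ) ^ 2 ≤
      Fintype.card κ * (Fintype.card ι * (1 + (Fintype.card ι - 1) * t)) := by
  classical
  have hframe := sq_trace_mul_transpose_le (Matrix.of u)
  have htrace : trace (Matrix.of u * (Matrix.of u)ᵀ) = Fintype.card ι := by
    change ∑ i, u i ⬝ᵥ u i = _
    simp [hu]
  rw [htrace] at hframe
  refine hframe.trans (mul_le_mul_of_nonneg_left ?_ (Nat.cast_nonneg _))
  calc ∑ i, ∑ j, (Matrix.of u * (Matrix.of u)ᵀ) i j ^ 2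
      = ∑ i, ∑ j, (u i ⬝ᵥ u j) ^ 2 := rfl
    _ ≤ ∑ _i : ι, (1 + (Fintype.card ι - 1) * t) :=
      sum_le_sum fun i _ ↦ sum_sq_dotProduct_le i (hu i) (ht i)
    _ = Fintype.card ι * (1 + (Fintype.card ι - 1) * t) := by
      rw [sum_const, card_univ, nsmul_eq_mul]

/-- For any `2n` unit vectors in `ℝⁿ`,
`max_{i ≠ j} |⟨uᵢ,uⱼ⟩| ≥ 1/√(2(2n-1))`. -/
theorem exists_pair_inner_ge
    (n : ℕ) (hn : 0 < n) (u : Fin (2 * n) → (Fin n → ℝ))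
    (hunit : ∀ i, ∑ k : Fin n, (u i k) ^ 2 = 1) :
    ∃ i j : Fin (2 * n), i ≠ j ∧
      1 / Real.sqrt (2 * (2 * (n : ℝ) - 1)) ≤ |∑ k : Fin n, u i k * u j k| := by
  by_contra! hsmall
  have hn1 : (1 : ℝ) ≤ n := by exact_mod_cast hn
  have hpos : (0 : ℝ) < 2 * n - 1 := by linarith
  have hdot : ∀ i, u i ⬝ᵥ u i = 1 := by simpa only [dotProduct, sq] using hunit
  have hoff : ∀ i j, i ≠ j → (u i ⬝ᵥ u j) ^ 2 ≤ 1 / (2 * (2 * n - 1)) := fun i j hij ↦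
    calc (u i ⬝ᵥ u j) ^ 2 = |u i ⬝ᵥ u j| ^ 2 := (sq_abs _).symm
      _ ≤ (1 / Real.sqrt (2 * (2 * n - 1))) ^ 2 :=
        pow_le_pow_left₀ (abs_nonneg _) (hsmall i j hij).le 2
      _ = 1 / (2 * (2 * n - 1)) := by rw [div_pow, one_pow, Real.sq_sqrt (by positivity)]
  have hbound := sq_card_le_of_sq_dotProduct_le hdot hoff
  have hhalf : (2 * (n : ℝ) - 1) * (1 / (2 * (2 * n - 1))) = 1 / 2 := by
    field_simp
  simp only [Fintype.card_fin, Nat.cast_mul, Nat.cast_ofNat, hhalf] at hbound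
  nlinarith
end

section
/- Let z be a prime and r a positive integer, and for each polynomial P over ℤ_z of degree at most r define u_P ∈ ℝ^{ℤ_z × ℤ_z} by u_P(x,y) = 1/√z if P(x) = y and 0 otherwise. Then for any two distinct polynomials P ≠ Q over ℤ_z, each of degree at most r, one has ⟨u_P, u_Q⟩ = |{x ∈ ℤ_z : P(x) = Q(x)}| / z, and consequently 0 ≤ ⟨u_P, u_Q⟩ ≤ r/z. -/
/-- For a prime `z`, a positive integer `r`, and two distinct
polynomials `P ≠ Q` over `ℤ_z` of degree at most `r`, the inner product of the
corresponding deVore columns equals `|{x : P(x) = Q(x)}| / z`, and consequently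
lies in `[0, r/z]`. -/
theorem devore_columns_inner_product
    (z : ℕ) [Fact (Nat.Prime z)] (r : ℕ) (hr : 0 < r)
    (P Q : Polynomial (ZMod z)) (hP : P.natDegree ≤ r) (hQ : Q.natDegree ≤ r)
    (hPQ : P ≠ Q)
    (uP uQ : ZMod z × ZMod z → ℝ)
    (huP : ∀ q : ZMod z × ZMod z,
      uP q = if P.eval q.1 = q.2 then 1 / Real.sqrt z else 0)
    (huQ : ∀ q : ZMod z × ZMod z,
      uQ q = if Q.eval q.1 = q.2 then 1 / Real.sqrt z else 0) :
    (∑ q : ZMod z × ZMod z, uP q * uQ q) =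
      ((Finset.univ.filter (fun x : ZMod z => P.eval x = Q.eval x)).card : ℝ)
        / z ∧
    0 ≤ ∑ q : ZMod z × ZMod z, uP q * uQ q ∧
    (∑ q : ZMod z × ZMod z, uP q * uQ q) ≤ (r : ℝ) / z := by
  have hzpos : 0 < (z : ℝ) := by
    exact_mod_cast (Fact.out : Nat.Prime z).pos
  have hsq : Real.sqrt z * Real.sqrt z = (z : ℝ) :=
    Real.mul_self_sqrt (le_of_lt hzpos)
  have ha : (1 / Real.sqrt z) * (1 / Real.sqrt z) = 1 / (z : ℝ) := by
    rw [div_mul_div_comm, one_mul, hsq]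
  have key : (∑ q : ZMod z × ZMod z, uP q * uQ q) =
      ((Finset.univ.filter (fun x : ZMod z => P.eval x = Q.eval x)).card : ℝ) / z := by
    have h1 : (∑ q : ZMod z × ZMod z, uP q * uQ q) =
        ∑ x : ZMod z, ∑ y : ZMod z,
          (if P.eval x = y then 1 / Real.sqrt z else 0) *
          (if Q.eval x = y then 1 / Real.sqrt z else 0) := by
      rw [Fintype.sum_prod_type]
      exact Finset.sum_congr rfl fun x _ => Finset.sum_congr rfl fun y _ => by
        rw [huP, huQ]
    rw [h1]
    have h2 : ∀ x : ZMod z,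
        (∑ y : ZMod z,
          (if P.eval x = y then 1 / Real.sqrt z else 0) *
          (if Q.eval x = y then 1 / Real.sqrt z else 0)) =
        if P.eval x = Q.eval x then 1 / (z : ℝ) else 0 := by
      intro x
      by_cases h : P.eval x = Q.eval x
      · rw [if_pos h]
        rw [Finset.sum_eq_single (P.eval x)]
        · rw [if_pos rfl, if_pos h.symm, ha]
        · intro y _ hy
          rw [if_neg fun hh => hy hh.symm, zero_mul]
        · intro hh; exact absurd (Finset.mem_univ _) hh
      · rw [if_neg h]
        apply Finset.sum_eq_zero
        intro y _
        by_cases h1 : P.eval x = y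
        · have h3 : ¬ Q.eval x = y := fun h2 => h (h1.trans h2.symm)
          simp [h3]
        · simp [h1]
    rw [Finset.sum_congr rfl fun x _ => h2 x, ← Finset.sum_filter,
      Finset.sum_const, nsmul_eq_mul, mul_one_div]
  refine ⟨key, ?_, ?_⟩
  · rw [key]; positivity
  · rw [key]
    have hcard : (Finset.univ.filter (fun x : ZMod z => P.eval x = Q.eval x)).card ≤ r := by
      have hne : P - Q ≠ 0 := sub_ne_zero.mpr hPQ
      have hsub : (Finset.univ.filter (fun x : ZMod z => P.eval x = Q.eval x)) ⊆
          (P - Q).roots.toFinset := by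
        intro x hx
        simp only [Finset.mem_filter, Finset.mem_univ, true_and] at hx
        rw [Multiset.mem_toFinset, Polynomial.mem_roots hne]
        simp [Polynomial.IsRoot, hx]
      calc (Finset.univ.filter (fun x : ZMod z => P.eval x = Q.eval x)).card
          ≤ (P - Q).roots.toFinset.card := Finset.card_le_card hsub
        _ ≤ Multiset.card (P - Q).roots := (P - Q).roots.toFinset_card_le
        _ ≤ (P - Q).natDegree := (P - Q).card_roots'
        _ ≤ r := le_trans (Polynomial.natDegree_sub_le P Q) (max_le hP hQ)
    gcongr
end

section
/- Let z be a prime and r a positive integer, and let Φ be the z² × z^{r+1} deVore matrix whose columns are indexed by the polynomials P over ℤ_z of degree at most r and whose entry in row (x,y) ∈ ℤ_z × ℤ_z and column P equals 1/√z if P(x) = y and 0 otherwise. Then for any positive integer s and any δ ∈ (0,1) with s·r/z ≤ δ, the matrix Φ satisfies the (s,δ)-Restricted Isometry Property: |‖Φv‖₂² − 1| ≤ δ for every s-sparse v with ‖v‖₂ = 1. -/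
/-- The `z² × z^{r+1}` deVore matrix — rows indexed by pairs
`(x,y) ∈ ℤ_z × ℤ_z`, columns indexed by the polynomials of degree at most `r`
over `ℤ_z` (given by their coefficient tuples `c : Fin (r+1) → ℤ_z`,
representing `P(x) = ∑ k, c k · xᵏ`), with entry `1/√z` if `P(x) = y` and `0`
otherwise — satisfies the `(s,δ)`-RIP whenever `s·r/z ≤ δ` and `δ ∈ (0,1)`. -/
theorem devore_matrix_rip
    (z : ℕ) [Fact (Nat.Prime z)] (r : ℕ) (hr : 0 < r)
    (Φ : Matrix (ZMod z × ZMod z) (Fin (r + 1) → ZMod z) ℝ)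
    (hΦ : ∀ (q : ZMod z × ZMod z) (c : Fin (r + 1) → ZMod z),
      Φ q c = if (∑ k : Fin (r + 1), c k * q.1 ^ (k : ℕ)) = q.2
        then 1 / Real.sqrt z else 0)
    (s : ℕ) (hs : 0 < s) (δ : ℝ) (hδ : δ ∈ Set.Ioo (0 : ℝ) 1)
    (hsrz : (s : ℝ) * r / z ≤ δ) :
    ∀ v : (Fin (r + 1) → ZMod z) → ℝ,
      (Finset.univ.filter (fun c => v c ≠ 0)).card ≤ s →
      ∑ c : Fin (r + 1) → ZMod z, (v c) ^ 2 = 1 →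
      |(∑ q : ZMod z × ZMod z, (Φ.mulVec v q) ^ 2) - 1| ≤ δ := by
  intro v hsupp hnorm
  have hzprime : Nat.Prime z := Fact.out
  have hz0 : (0:ℝ) < z := by exact_mod_cast hzprime.pos
  have ha2 : (1 / Real.sqrt z) * (1 / Real.sqrt z) = 1 / z := by
    rw [div_mul_div_comm, one_mul, Real.mul_self_sqrt hz0.le]
  have hainv : (Real.sqrt (z:ℝ))⁻¹ * (Real.sqrt (z:ℝ))⁻¹ = ((z:ℝ))⁻¹ := by
    rw [← mul_inv, Real.mul_self_sqrt hz0.le]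
  classical
  -- Gram entries
  have hGval : ∀ c c' : Fin (r + 1) → ZMod z,
      (∑ q : ZMod z × ZMod z, Φ q c * Φ q c') =
      ((Finset.univ.filter (fun x : ZMod z =>
        (∑ k : Fin (r+1), c k * x ^ (k:ℕ)) = ∑ k : Fin (r+1), c' k * x ^ (k:ℕ))).card : ℝ) / z := by
    intro c c'
    rw [Fintype.sum_prod_type]
    have hrow : ∀ x : ZMod z,
        (∑ y : ZMod z, Φ (x, y) c * Φ (x, y) c')
          = if (∑ k : Fin (r+1), c k * x ^ (k:ℕ)) = ∑ k : Fin (r+1), c' k * x ^ (k:ℕ)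
            then 1 / (z : ℝ) else 0 := by
      intro x
      by_cases hP : (∑ k : Fin (r+1), c k * x ^ (k:ℕ)) = ∑ k : Fin (r+1), c' k * x ^ (k:ℕ)
      · rw [if_pos hP]
        have h1 : ∀ y : ZMod z, Φ (x, y) c * Φ (x, y) c'
            = if (∑ k : Fin (r+1), c k * x ^ (k:ℕ)) = y then 1 / (z : ℝ) else 0 := by
          intro y
          rw [hΦ, hΦ]
          by_cases h : (∑ k : Fin (r+1), c k * x ^ (k:ℕ)) = y <;>
            simp [h, ← hP, ha2, hainv]
        simp [h1]
      · rw [if_neg hP]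
        have h1 : ∀ y : ZMod z, Φ (x, y) c * Φ (x, y) c' = 0 := by
          intro y
          rw [hΦ, hΦ]
          by_cases h : (∑ k : Fin (r+1), c k * x ^ (k:ℕ)) = y <;>
            by_cases h' : (∑ k : Fin (r+1), c' k * x ^ (k:ℕ)) = y <;>
            simp [h, h']
          exact absurd (h.trans h'.symm) hP
        simp [h1]
    simp only [hrow]
    rw [← Finset.sum_filter, Finset.sum_const, nsmul_eq_mul, mul_one_div]
  -- diagonal = 1
  have hGdiag : ∀ c : Fin (r + 1) → ZMod z,
      (∑ q : ZMod z × ZMod z, Φ q c * Φ q c) = 1 := by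
    intro c
    rw [hGval]
    simp [ZMod.card z, div_self hz0.ne']
  -- off-diagonal bound
  have hGoff : ∀ c c' : Fin (r + 1) → ZMod z, c ≠ c' →
      (∑ q : ZMod z × ZMod z, Φ q c * Φ q c') ≤ (r : ℝ) / z := by
    intro c c' hne
    rw [hGval]
    have hcard : ((Finset.univ.filter (fun x : ZMod z =>
        (∑ k : Fin (r+1), c k * x ^ (k:ℕ)) = ∑ k : Fin (r+1), c' k * x ^ (k:ℕ))).card : ℝ) ≤ r := by
      obtain ⟨k0, hk0⟩ : ∃ k, c k ≠ c' k := by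
        by_contra h; push_neg at h; exact hne (funext h)
      set p : Polynomial (ZMod z) :=
        ∑ k : Fin (r+1), Polynomial.C (c k - c' k) * Polynomial.X ^ (k:ℕ) with hp
      have hcoeff : p.coeff (k0:ℕ) = c k0 - c' k0 := by
        simp only [hp, Polynomial.finset_sum_coeff, Polynomial.coeff_C_mul,
          Polynomial.coeff_X_pow, mul_ite, mul_one, mul_zero, Fin.val_eq_val]
        simp [Finset.sum_ite_eq]
      have hp0 : p ≠ 0 := by
        intro h
        rw [h, Polynomial.coeff_zero] at hcoeff
        exact hk0 (by rwa [eq_comm, sub_eq_zero] at hcoeff)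
      have hdeg : p.natDegree ≤ r := by
        refine Polynomial.natDegree_sum_le_of_forall_le _ _ fun k _ => ?_
        exact (Polynomial.natDegree_C_mul_X_pow_le _ _).trans (Fin.is_le k)
      have hsub : Finset.univ.filter (fun x : ZMod z =>
          (∑ k : Fin (r+1), c k * x ^ (k:ℕ)) = ∑ k : Fin (r+1), c' k * x ^ (k:ℕ))
          ⊆ p.roots.toFinset := by
        intro x hx
        simp only [Finset.mem_filter] at hx
        rw [Multiset.mem_toFinset, Polynomial.mem_roots']
        refine ⟨hp0, ?_⟩
        have heval : p.eval x
            = (∑ k : Fin (r+1), c k * x ^ (k:ℕ)) - ∑ k : Fin (r+1), c' k * x ^ (k:ℕ) := by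
          simp [hp, Polynomial.eval_finset_sum, sub_mul, Finset.sum_sub_distrib]
        rw [Polynomial.IsRoot, heval, sub_eq_zero]
        exact hx.2
      have : (Finset.univ.filter (fun x : ZMod z =>
          (∑ k : Fin (r+1), c k * x ^ (k:ℕ)) = ∑ k : Fin (r+1), c' k * x ^ (k:ℕ))).card ≤ r :=
        calc _ ≤ p.roots.toFinset.card := Finset.card_le_card hsub
          _ ≤ Multiset.card p.roots := p.roots.toFinset_card_le
          _ ≤ p.natDegree := p.card_roots'
          _ ≤ r := hdeg
      exact_mod_cast this
    exact div_le_div_of_nonneg_right hcard hz0.le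
  have hGnn : ∀ c c' : Fin (r + 1) → ZMod z,
      0 ≤ ∑ q : ZMod z × ZMod z, Φ q c * Φ q c' := by
    intro c c'; rw [hGval]; positivity
  -- expand the quadratic form
  have hexpand : (∑ q : ZMod z × ZMod z, (Φ.mulVec v q) ^ 2)
      = ∑ c : Fin (r + 1) → ZMod z, ∑ c' : Fin (r + 1) → ZMod z,
          v c * v c' * ∑ q : ZMod z × ZMod z, Φ q c * Φ q c' := by
    simp only [Matrix.mulVec, dotProduct, sq, Finset.sum_mul_sum]
    rw [Finset.sum_comm]
    refine Finset.sum_congr rfl fun c _ => ?_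
    rw [Finset.sum_comm]
    refine Finset.sum_congr rfl fun c' _ => ?_
    rw [Finset.mul_sum]
    exact Finset.sum_congr rfl fun q _ => by ring
  have hdiff : (∑ q : ZMod z × ZMod z, (Φ.mulVec v q) ^ 2) - 1
      = ∑ c : Fin (r + 1) → ZMod z, ∑ c' ∈ Finset.univ.erase c,
          v c * v c' * ∑ q : ZMod z × ZMod z, Φ q c * Φ q c' := by
    rw [hexpand]
    nth_rewrite 1 [← hnorm]
    rw [← Finset.sum_sub_distrib]
    refine Finset.sum_congr rfl fun c _ => ?_
    rw [← Finset.add_sum_erase Finset.univ _ (Finset.mem_univ c), hGdiag c]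
    ring
  set A : ℝ := ∑ c : Fin (r + 1) → ZMod z, |v c| with hA
  have hterm : ∀ c : Fin (r + 1) → ZMod z, ∀ c' ∈ Finset.univ.erase c,
      |v c * v c' * ∑ q : ZMod z × ZMod z, Φ q c * Φ q c'|
        ≤ |v c| * |v c'| * ((r:ℝ)/z) := by
    intro c c' hc'
    rw [abs_mul, abs_mul]
    have hne : c ≠ c' := (Finset.ne_of_mem_erase hc').symm
    have := hGoff c c' hne
    have h0 := hGnn c c'
    have : |∑ q : ZMod z × ZMod z, Φ q c * Φ q c'| ≤ (r:ℝ)/z := by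
      rw [abs_of_nonneg h0]; exact this
    gcongr
  have hsum2 : ∑ c : Fin (r + 1) → ZMod z, ∑ c' ∈ Finset.univ.erase c,
      |v c| * |v c'| * ((r:ℝ)/z) = (A^2 - 1) * ((r:ℝ)/z) := by
    have h1 : ∀ c : Fin (r + 1) → ZMod z,
        ∑ c' ∈ Finset.univ.erase c, |v c| * |v c'| * ((r:ℝ)/z)
          = |v c| * (A - |v c|) * ((r:ℝ)/z) := by
      intro c
      rw [show ∀ S : ℝ, |v c| * S * ((r:ℝ)/z) = |v c| * S * ((r:ℝ)/z) from fun _ => rfl]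
      rw [← Finset.sum_mul, ← Finset.mul_sum,
        Finset.sum_erase_eq_sub (Finset.mem_univ c)]
    simp only [h1]
    have : ∑ c : Fin (r + 1) → ZMod z, |v c| * (A - |v c|) = A^2 - 1 := by
      have : ∑ c : Fin (r + 1) → ZMod z, |v c| * (A - |v c|)
          = A * A - ∑ c : Fin (r + 1) → ZMod z, |v c|^2 := by
        simp only [mul_sub, Finset.sum_sub_distrib, ← Finset.sum_mul, ← hA, sq]
      simp only [sq_abs, hnorm] at this
      rw [this]; ring
    rw [← Finset.sum_mul, this]
  have habs : |(∑ q : ZMod z × ZMod z, (Φ.mulVec v q) ^ 2) - 1|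
      ≤ (A^2 - 1) * ((r:ℝ)/z) := by
    rw [hdiff, ← hsum2]
    refine (Finset.abs_sum_le_sum_abs _ _).trans ?_
    refine Finset.sum_le_sum fun c _ => ?_
    refine (Finset.abs_sum_le_sum_abs _ _).trans ?_
    exact Finset.sum_le_sum (hterm c)
  -- Cauchy–Schwarz: A² ≤ s
  have hA2 : A^2 ≤ (s:ℝ) := by
    have hfil : A = ∑ c ∈ Finset.univ.filter (fun c => v c ≠ 0), |v c| := by
      rw [hA, Finset.sum_filter_of_ne]
      intro c _ h hc
      exact h (by simp [hc])
    have hcs := Finset.sum_mul_sq_le_sq_mul_sq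
      (Finset.univ.filter (fun c => v c ≠ 0)) (fun _ => (1:ℝ)) (fun c => |v c|)
    simp only [one_mul, one_pow, Finset.sum_const, nsmul_eq_mul, mul_one, sq_abs] at hcs
    have hle1 : ∑ c ∈ Finset.univ.filter (fun c => v c ≠ 0), (v c)^2 ≤ 1 := by
      rw [← hnorm]
      exact Finset.sum_le_sum_of_subset_of_nonneg (Finset.filter_subset _ _)
        (fun c _ _ => sq_nonneg _)
    calc A^2 = (∑ c ∈ Finset.univ.filter (fun c => v c ≠ 0), |v c|)^2 := by rw [hfil]
      _ ≤ ((Finset.univ.filter (fun c => v c ≠ 0)).card : ℝ)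
            * ∑ c ∈ Finset.univ.filter (fun c => v c ≠ 0), (v c)^2 := hcs
      _ ≤ (s : ℝ) * 1 := by
          refine mul_le_mul ?_ hle1 ?_ (Nat.cast_nonneg s)
          · exact_mod_cast hsupp
          · positivity
      _ = (s : ℝ) := mul_one _
  have hrz : (0:ℝ) ≤ (r:ℝ)/z := by positivity
  have hfin : (A^2 - 1) * ((r:ℝ)/z) ≤ (s:ℝ) * r / z := by
    have h1 : (A^2 - 1) * ((r:ℝ)/z) ≤ (s:ℝ) * ((r:ℝ)/z) := by
      apply mul_le_mul_of_nonneg_right _ hrz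
      linarith
    calc (A^2 - 1) * ((r:ℝ)/z) ≤ (s:ℝ) * ((r:ℝ)/z) := h1
      _ = (s:ℝ) * r / z := by ring
  exact habs.trans (hfin.trans hsrz)
end

section
/- Let n, p be positive integers and let Φ ∈ ℝ^{n×p} with unit Euclidean norm columns u_1, …, u_p satisfy the (s,δ)-Restricted Isometry Property for some δ ∈ (0,1) and some s ≥ 2√n + 1. Define the 3-coloring of pairs {i,j} ⊆ {1,…,p}: white if |⟨u_i,u_j⟩| ≤ 1/(2√n), blue if ⟨u_i,u_j⟩ > 1/(2√n), red if ⟨u_i,u_j⟩ < −1/(2√n). Then every monochromatic clique (of any of the three colors) has size strictly less than 2n; i.e., the coloring is R(2n; 3) Ramsey. -/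
/-! For a white clique `C` no RIP is needed: its Gram matrix `G = (⟨uᵢ, uⱼ⟩)_{i,j ∈ C}` has
trace `#C`, and passing to the `n × n` matrix `Φ_C Φ_Cᵀ`, which has the same trace and Frobenius
norm, Cauchy–Schwarz gives `#C² ≤ n ‖G‖_F² ≤ n (#C + #C (#C - 1) / (4n))`, whence `#C < 4n/3`.

For a blue or red clique, test the RIP on the normalized indicator `x` of a sub-clique of
size `t = ⌈2√n + 1⌉ ≤ min(s, 2n)` (when `n ≥ 2`): then `‖Φx‖² = t⁻¹ ∑_{i,j} Gᵢⱼ` is at least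
`1 + (t - 1)/(2√n) ≥ 2` for a blue clique and at most `1 - (t - 1)/(2√n) ≤ 0` for a red one,
contradicting `1 - δ ≤ ‖Φx‖² ≤ 1 + δ`. -/

open Finset Matrix

variable {m ι κ : Type*} [Fintype m]

theorem card_mul_add_le_sum_sum (f : κ → κ → ℝ) (T : Finset κ) {a c : ℝ}
    (hdiag : ∀ i ∈ T, f i i = a) (hoff : ∀ i ∈ T, ∀ j ∈ T, i ≠ j → c ≤ f i j) :
    #T * (a + (#T - 1) * c) ≤ ∑ i ∈ T, ∑ j ∈ T, f i j := by
  classical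
  have hrow : ∀ i ∈ T, a + (#T - 1) * c ≤ ∑ j ∈ T, f i j := by
    intro i hi
    have hoff_i := card_nsmul_le_sum (T.erase i) (f i) c fun j hj =>
      hoff i hi j (mem_of_mem_erase hj) (ne_of_mem_erase hj).symm
    rw [card_erase_of_mem hi, nsmul_eq_mul, Nat.cast_pred (card_pos.mpr ⟨i, hi⟩)] at hoff_i
    rw [← add_sum_erase T _ hi, hdiag i hi]
    linarith
  simpa only [nsmul_eq_mul] using card_nsmul_le_sum T _ _ hrow

theorem sum_sq_eq_trace_mul_transpose [Fintype ι] (M : Matrix m ι ℝ) :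
    ∑ i, ∑ j, M i j ^ 2 = trace (M * Mᵀ) := by
  simp [trace, mul_apply, sq]

theorem sum_sq_transpose_mul_self_eq [Fintype ι] (A : Matrix m ι ℝ) :
    ∑ i, ∑ j, (Aᵀ * A) i j ^ 2 = ∑ k, ∑ l, (A * Aᵀ) k l ^ 2 := by
  simp only [sum_sq_eq_trace_mul_transpose, transpose_mul, transpose_transpose, ← Matrix.mul_assoc]
  rw [trace_mul_comm, ← Matrix.mul_assoc, ← Matrix.mul_assoc]

theorem sq_trace_transpose_mul_self_le [Fintype ι] (A : Matrix m ι ℝ) :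
    trace (Aᵀ * A) ^ 2 ≤ Fintype.card m * ∑ i, ∑ j, (Aᵀ * A) i j ^ 2 := by
  rw [trace_mul_comm, sum_sq_transpose_mul_self_eq]
  calc trace (A * Aᵀ) ^ 2 ≤ Fintype.card m * ∑ k, (A * Aᵀ) k k ^ 2 :=
        sq_sum_le_card_mul_sum_sq (s := univ) (f := fun k => (A * Aᵀ) k k)
    _ ≤ _ := by
        gcongr with k
        exact single_le_sum (f := fun l => (A * Aᵀ) k l ^ 2) (fun _ _ => sq_nonneg _) (mem_univ k)

def HasRIP [Fintype κ] (Φ : Matrix m κ ℝ) (s : ℕ) (δ : ℝ) : Prop :=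
  ∀ x : κ → ℝ, #{i | x i ≠ 0} ≤ s → ∑ i, x i ^ 2 = 1 → |∑ k, (Φ *ᵥ x) k ^ 2 - 1| ≤ δ

theorem sum_mulVec_indicator_sq [Fintype κ] [DecidableEq κ] (Φ : Matrix m κ ℝ) (T : Finset κ)
    (c : ℝ) :
    ∑ k, (Φ *ᵥ fun l => if l ∈ T then c else 0) k ^ 2
      = c ^ 2 * ∑ i ∈ T, ∑ j ∈ T, (Φᵀ * Φ) i j := by
  have hrow : ∀ k, (Φ *ᵥ fun l => if l ∈ T then c else 0) k = c * ∑ l ∈ T, Φ k l := by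
    intro k
    simp [mulVec, dotProduct, mul_sum, mul_comm]
  simp only [hrow, mul_pow, ← mul_sum]
  congr 1
  simp only [sq, sum_mul_sum, mul_apply, transpose_apply]
  rw [sum_comm]
  exact sum_congr rfl fun i _ => sum_comm

theorem HasRIP.abs_sum_gram_div_card_sub_one_le [Fintype κ] {Φ : Matrix m κ ℝ} {s : ℕ} {δ : ℝ}
    (h : HasRIP Φ s δ) {T : Finset κ} (hT : T.Nonempty) (hTs : #T ≤ s) :
    |(∑ i ∈ T, ∑ j ∈ T, (Φᵀ * Φ) i j) / #T - 1| ≤ δ := by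
  classical
  have ht : (0 : ℝ) < #T := by exact_mod_cast hT.card_pos
  have hc : (√(#T : ℝ))⁻¹ ^ 2 = (#T : ℝ)⁻¹ := by rw [inv_pow, Real.sq_sqrt ht.le]
  have hsupp : #{i | (if i ∈ T then (√(#T : ℝ))⁻¹ else 0) ≠ 0} = #T := by
    congr 1
    ext i
    by_cases hi : i ∈ T <;> simp [hi, ht.ne']
  have hnorm : ∑ i, (if i ∈ T then (√(#T : ℝ))⁻¹ else 0) ^ 2 = 1 := by
    simp [apply_ite (· ^ 2), hc, ht.ne']
  have := h _ (hsupp.trans_le hTs) hnorm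
  rwa [sum_mulVec_indicator_sq, hc, inv_mul_eq_div] at this

theorem card_lt_of_abs_gram_le [Fintype κ] (hm : 0 < Fintype.card m) (Φ : Matrix m κ ℝ)
    (hdiag : ∀ i, (Φᵀ * Φ) i i = 1) {ε : ℝ} (hε : 4 * Fintype.card m * ε ^ 2 ≤ 1)
    {C : Finset κ} (hC : ∀ i ∈ C, ∀ j ∈ C, i ≠ j → |(Φᵀ * Φ) i j| ≤ ε) :
    #C < 2 * Fintype.card m := by
  set A : Matrix m C ℝ := Φ.submatrix id (↑)
  have htrace : trace (Aᵀ * A) = #C :=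
    calc trace (Aᵀ * A) = ∑ _i : C, (1 : ℝ) := sum_congr rfl fun i _ => hdiag i
      _ = #C := by simp
  have hfrob : ∑ i, ∑ j, (Aᵀ * A) i j ^ 2 = ∑ i ∈ C, ∑ j ∈ C, (Φᵀ * Φ) i j ^ 2 := by
    rw [← sum_coe_sort C]
    exact sum_congr rfl fun i _ => sum_coe_sort C (fun j => (Φᵀ * Φ) i j ^ 2)
  have hoff := card_mul_add_le_sum_sum (fun i j => -((Φᵀ * Φ) i j ^ 2)) C (a := -1) (c := -ε ^ 2)
    (fun i _ => by simp [hdiag])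
    fun i hi j hj hij => neg_le_neg (sq_abs ((Φᵀ * Φ) i j) ▸
      pow_le_pow_left₀ (abs_nonneg _) (hC i hi j hj hij) 2)
  simp only [sum_neg_distrib] at hoff
  have hcauchy := sq_trace_transpose_mul_self_le A
  rw [htrace, hfrob] at hcauchy
  by_contra! hCm
  have hN : (1 : ℝ) ≤ Fintype.card m := by exact_mod_cast hm
  have hM : 2 * (Fintype.card m : ℝ) ≤ #C := by exact_mod_cast hCm
  set M : ℝ := (#C : ℝ)
  set N : ℝ := (Fintype.card m : ℝ)
  have hM2 : M ^ 2 ≤ N * M + M * (M - 1) / 4 := by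
    nlinarith [mul_nonneg (by linarith : 0 ≤ M) (by linarith : 0 ≤ M - 1)]
  nlinarith

namespace HasRIP

variable [Fintype κ] {Φ : Matrix m κ ℝ} {s : ℕ} {δ : ℝ}

theorem card_lt_of_le_gram (h : HasRIP Φ s δ) (hδ : δ < 1) (hdiag : ∀ i, (Φᵀ * Φ) i i = 1)
    {t : ℕ} {c : ℝ} (ht : 0 < t) (hts : t ≤ s) (htc : 1 ≤ (t - 1) * c) {C : Finset κ}
    (hC : ∀ i ∈ C, ∀ j ∈ C, i ≠ j → c ≤ (Φᵀ * Φ) i j) : #C < t := by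
  by_contra! htC
  obtain ⟨T, hTC, rfl⟩ := exists_subset_card_eq htC
  have hsum := card_mul_add_le_sum_sum _ T (fun i _ => hdiag i)
    fun i hi j hj => hC i (hTC hi) j (hTC hj)
  have hrip := (abs_le.mp (h.abs_sum_gram_div_card_sub_one_le (card_pos.mp ht) hts)).2
  have hT : (0 : ℝ) < #T := by exact_mod_cast ht
  rw [sub_le_iff_le_add, div_le_iff₀ hT] at hrip
  nlinarith

theorem card_lt_of_gram_le (h : HasRIP Φ s δ) (hδ : δ < 1) (hdiag : ∀ i, (Φᵀ * Φ) i i = 1)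
    {t : ℕ} {c : ℝ} (ht : 0 < t) (hts : t ≤ s) (htc : 1 ≤ (t - 1) * c) {C : Finset κ}
    (hC : ∀ i ∈ C, ∀ j ∈ C, i ≠ j → (Φᵀ * Φ) i j ≤ -c) : #C < t := by
  by_contra! htC
  obtain ⟨T, hTC, rfl⟩ := exists_subset_card_eq htC
  have hsum := card_mul_add_le_sum_sum (fun i j => -(Φᵀ * Φ) i j) T (a := -1)
    (fun i _ => by simp [hdiag]) fun i hi j hj hij => le_neg.mpr (hC i (hTC hi) j (hTC hj) hij)
  simp only [sum_neg_distrib] at hsum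
  have hrip := (abs_le.mp (h.abs_sum_gram_div_card_sub_one_le (card_pos.mp ht) hts)).1
  have hT : (0 : ℝ) < #T := by exact_mod_cast ht
  rw [neg_le_sub_iff_le_add, ← sub_le_iff_le_add, le_div_iff₀ hT] at hrip
  nlinarith

end HasRIP

theorem abs_gram_eq_one_of_unique [Unique m] [Fintype κ] (Φ : Matrix m κ ℝ)
    (hdiag : ∀ i, (Φᵀ * Φ) i i = 1) (i j : κ) : |(Φᵀ * Φ) i j| = 1 := by
  have hsq : ∀ i j, (Φᵀ * Φ) i j = Φ default i * Φ default j := fun i j => by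
    simp [mul_apply]
  rw [← pow_eq_one_iff_of_nonneg (abs_nonneg _) two_ne_zero, sq_abs, hsq, mul_pow, sq, sq,
    ← hsq, ← hsq, hdiag, hdiag, one_mul]

theorem exists_size_and_margin {n s : ℕ} (hn : 0 < n) [Fintype κ] (Φ : Matrix (Fin n) κ ℝ)
    (hdiag : ∀ i, (Φᵀ * Φ) i i = 1) (hs : 2 * √n + 1 ≤ s) :
    ∃ (t : ℕ) (c : ℝ), 0 < t ∧ t ≤ s ∧ t ≤ 2 * n ∧ 1 ≤ (t - 1) * c ∧
      ∀ i j, (1 / (2 * √n) < (Φᵀ * Φ) i j → c ≤ (Φᵀ * Φ) i j) ∧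
        ((Φᵀ * Φ) i j < -(1 / (2 * √n)) → (Φᵀ * Φ) i j ≤ -c) := by
  obtain rfl | hn2 : n = 1 ∨ 2 ≤ n := by omega
  · -- in dimension one every off-diagonal Gram entry is `±1`, so the margin can be `1`
    refine ⟨2, 1, two_pos, ?_, le_rfl, by norm_num, fun i j => ?_⟩
    · norm_num at hs
      omega
    · rcases (abs_eq zero_le_one).mp (abs_gram_eq_one_of_unique Φ hdiag i j) with h | h <;>
        · rw [h]; norm_num
  · have hsqrt : √(n : ℝ) ^ 2 = n := Real.sq_sqrt n.cast_nonneg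
    have hn2' : (2 : ℝ) ≤ n := by exact_mod_cast hn2
    have hpos : 0 < √(n : ℝ) := by positivity
    refine ⟨⌈2 * √n + 1⌉₊, 1 / (2 * √n), ?_, Nat.ceil_le.mpr hs, Nat.ceil_le.mpr ?_, ?_,
      fun i j => ⟨le_of_lt, le_of_lt⟩⟩
    · exact Nat.ceil_pos.mpr (by positivity)
    · push_cast
      nlinarith [sq_nonneg (√(n : ℝ) - 1)]
    · rw [mul_one_div, le_div_iff₀ (by positivity)]
      linarith [Nat.le_ceil (2 * √(n : ℝ) + 1)]

theorem rip_implies_R2n_three_ramsey_general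
    (n p : ℕ) (hn : 0 < n)
    (Φ : Matrix (Fin n) (Fin p) ℝ)
    (hcol : ∀ j : Fin p, ∑ k : Fin n, (Φ k j) ^ 2 = 1)
    (s : ℕ) (δ : ℝ) (hδ : δ ∈ Set.Ioo (0 : ℝ) 1)
    (hs : 2 * Real.sqrt n + 1 ≤ (s : ℝ))
    (hRIP : ∀ x : Fin p → ℝ,
      (Finset.univ.filter (fun i => x i ≠ 0)).card ≤ s →
      ∑ i : Fin p, (x i) ^ 2 = 1 →
      |(∑ k : Fin n, (Φ.mulVec x k) ^ 2) - 1| ≤ δ) :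
    (∀ C : Finset (Fin p),
      (∀ i ∈ C, ∀ j ∈ C, i ≠ j →
        |∑ k : Fin n, Φ k i * Φ k j| ≤ 1 / (2 * Real.sqrt n)) →
      C.card < 2 * n) ∧
    (∀ C : Finset (Fin p),
      (∀ i ∈ C, ∀ j ∈ C, i ≠ j →
        1 / (2 * Real.sqrt n) < ∑ k : Fin n, Φ k i * Φ k j) →
      C.card < 2 * n) ∧
    (∀ C : Finset (Fin p),
      (∀ i ∈ C, ∀ j ∈ C, i ≠ j →
        (∑ k : Fin n, Φ k i * Φ k j) < -(1 / (2 * Real.sqrt n))) →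
      C.card < 2 * n) := by
  have hRIP : HasRIP Φ s δ := hRIP
  have hdiag : ∀ i, (Φᵀ * Φ) i i = 1 := fun i => by
    rw [← hcol i]
    simp [mul_apply, sq]
  have hε : 4 * Fintype.card (Fin n) * (1 / (2 * √n)) ^ 2 ≤ 1 := by
    rw [Fintype.card_fin, div_pow, mul_pow, Real.sq_sqrt n.cast_nonneg]
    field_simp
    norm_num
  obtain ⟨t, c, ht, hts, htn, htc, hmargin⟩ := exists_size_and_margin hn Φ hdiag hs
  refine ⟨fun C hC => ?_, fun C hC => ?_, fun C hC => ?_⟩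
  · simpa using card_lt_of_abs_gram_le (by simpa using hn) Φ hdiag hε hC
  · exact (hRIP.card_lt_of_le_gram hδ.2 hdiag ht hts htc
      fun i hi j hj hij => (hmargin i j).1 (hC i hi j hj hij)).trans_le htn
  · exact (hRIP.card_lt_of_gram_le hδ.2 hdiag ht hts htc
      fun i hi j hj hij => (hmargin i j).2 (hC i hi j hj hij)).trans_le htn

/-- If `Φ` with unit norm columns satisfies the `(s,δ)`-RIP with
`δ ∈ (0,1)` and `s ≥ 2√n + 1`, then for the 3-coloring (white if
`|⟨uᵢ,uⱼ⟩| ≤ 1/(2√n)`, blue if `⟨uᵢ,uⱼ⟩ > 1/(2√n)`, red if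
`⟨uᵢ,uⱼ⟩ < -1/(2√n)`) every monochromatic clique of any color has size `< 2n`;
i.e. the coloring is `R(2n; 3)` Ramsey. -/
theorem rip_implies_R2n_three_ramsey
    (n p : ℕ) (hn : 0 < n) (hp : 0 < p)
    (Φ : Matrix (Fin n) (Fin p) ℝ)
    (hcol : ∀ j : Fin p, ∑ k : Fin n, (Φ k j) ^ 2 = 1)
    (s : ℕ) (δ : ℝ) (hδ : δ ∈ Set.Ioo (0 : ℝ) 1)
    (hs : 2 * Real.sqrt n + 1 ≤ (s : ℝ))
    (hRIP : ∀ x : Fin p → ℝ,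
      (Finset.univ.filter (fun i => x i ≠ 0)).card ≤ s →
      ∑ i : Fin p, (x i) ^ 2 = 1 →
      |(∑ k : Fin n, (Φ.mulVec x k) ^ 2) - 1| ≤ δ) :
    (∀ C : Finset (Fin p),
      (∀ i ∈ C, ∀ j ∈ C, i ≠ j →
        |∑ k : Fin n, Φ k i * Φ k j| ≤ 1 / (2 * Real.sqrt n)) →
      C.card < 2 * n) ∧
    (∀ C : Finset (Fin p),
      (∀ i ∈ C, ∀ j ∈ C, i ≠ j →
        1 / (2 * Real.sqrt n) < ∑ k : Fin n, Φ k i * Φ k j) →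
      C.card < 2 * n) ∧
    (∀ C : Finset (Fin p),
      (∀ i ∈ C, ∀ j ∈ C, i ≠ j →
        (∑ k : Fin n, Φ k i * Φ k j) < -(1 / (2 * Real.sqrt n))) →
      C.card < 2 * n) :=
  rip_implies_R2n_three_ramsey_general n p hn Φ hcol s δ hδ hs hRIP
end
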